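/- Let D and D' be two datasets of size N differing in exactly one data point, all feature vectors satisfying ‖x‖_2 ≤ 1. Let β₁* and β₂* be the unique minimizers of the λ-regularized multinomial logistic regression objectives J(β,D) and J(β,D') with C classes. Then ‖β₁* - β₂*‖_2 ≤ 2√C/(λN). -/

import Mathlib

open scoped BigOperators

noncomputable def logSoftmaxLoss {C d : ℕ} (x : EuclideanSpace ℝ (Fin d)) (y : Fin C)
    (β : EuclideanSpace ℝ (Fin C × Fin d)) : ℝ :=
  -Real.log (Real.exp (∑ j, β (y, j) * x j) /
    ∑ k : Fin C, Real.exp (∑ j, β (k, j) * x j))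

noncomputable def regMLR {C d N : ℕ} (lam : ℝ)
    (D : Fin N → EuclideanSpace ℝ (Fin d) × Fin C)
    (β : EuclideanSpace ℝ (Fin C × Fin d)) : ℝ :=
  (1 / (N : ℝ)) * ∑ i, logSoftmaxLoss (D i).1 (D i).2 β + lam / 2 * ‖β‖ ^ 2

section Helpers
open Real Finset

lemma sum_exp_pos' {C : ℕ} [Nonempty (Fin C)] (f : Fin C → ℝ) :
    0 < ∑ k : Fin C, Real.exp (f k) :=
  Finset.sum_pos (fun k _ => Real.exp_pos _) Finset.univ_nonempty

lemma lse_shift {C : ℕ} [Nonempty (Fin C)] (a b : Fin C → ℝ) (m : ℝ)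
    (h : ∀ k, a k ≤ b k + m) :
    Real.log (∑ k, Real.exp (a k)) ≤ m + Real.log (∑ k, Real.exp (b k)) := by
  have h1 : ∑ k, Real.exp (a k) ≤ Real.exp m * ∑ k, Real.exp (b k) := by
    rw [Finset.mul_sum]
    refine Finset.sum_le_sum fun k _ => ?_
    rw [← Real.exp_add]
    exact Real.exp_le_exp.2 (by linarith [h k])
  calc Real.log (∑ k, Real.exp (a k))
      ≤ Real.log (Real.exp m * ∑ k, Real.exp (b k)) :=
        Real.log_le_log (sum_exp_pos' a) h1
    _ = m + Real.log (∑ k, Real.exp (b k)) := by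
        rw [Real.log_mul (Real.exp_pos m).ne' (sum_exp_pos' b).ne', Real.log_exp]

lemma lse_convex {C : ℕ} [Nonempty (Fin C)] (u v : Fin C → ℝ) {a b : ℝ}
    (ha : 0 ≤ a) (hb : 0 ≤ b) (hab : a + b = 1) :
    Real.log (∑ k, Real.exp (a * u k + b * v k)) ≤
      a * Real.log (∑ k, Real.exp (u k)) + b * Real.log (∑ k, Real.exp (v k)) := by
  rcases eq_or_lt_of_le ha with ha0 | ha
  · have hb1 : b = 1 := by linarith
    simp [← ha0, hb1]
  rcases eq_or_lt_of_le hb with hb0 | hb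
  · have ha1 : a = 1 := by linarith
    simp [← hb0, ha1]
  have ha1 : a < 1 := by linarith
  have hpq : Real.HolderConjugate a⁻¹ b⁻¹ :=
    Real.holderConjugate_iff.2 ⟨((one_lt_inv₀ ha).2 ha1), by rw [inv_inv, inv_inv]; exact hab⟩
  have key : ∑ k, Real.exp (a * u k + b * v k) ≤
      (∑ k, Real.exp (u k)) ^ a * (∑ k, Real.exp (v k)) ^ b := by
    have H := Real.inner_le_Lp_mul_Lq_of_nonneg (Finset.univ (α := Fin C)) hpq
      (f := fun k => Real.exp (a * u k)) (g := fun k => Real.exp (b * v k))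
      (fun k _ => (Real.exp_pos _).le) (fun k _ => (Real.exp_pos _).le)
    have hf : ∀ k : Fin C, Real.exp (a * u k) ^ a⁻¹ = Real.exp (u k) := by
      intro k
      rw [← Real.exp_mul]
      congr 1
      field_simp
    have hg : ∀ k : Fin C, Real.exp (b * v k) ^ b⁻¹ = Real.exp (v k) := by
      intro k
      rw [← Real.exp_mul]
      congr 1
      field_simp
    simp only [hf, hg, one_div, inv_inv] at H
    simpa [Real.exp_add] using H
  calc Real.log (∑ k, Real.exp (a * u k + b * v k))
      ≤ Real.log ((∑ k, Real.exp (u k)) ^ a * (∑ k, Real.exp (v k)) ^ b) :=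
        Real.log_le_log (sum_exp_pos' _) key
    _ = a * Real.log (∑ k, Real.exp (u k)) + b * Real.log (∑ k, Real.exp (v k)) := by
        rw [Real.log_mul (Real.rpow_pos_of_pos (sum_exp_pos' u) a).ne'
          (Real.rpow_pos_of_pos (sum_exp_pos' v) b).ne',
          Real.log_rpow (sum_exp_pos' u), Real.log_rpow (sum_exp_pos' v)]


lemma lsl_eq {C d : ℕ} (x : EuclideanSpace ℝ (Fin d)) (y : Fin C)
    (β : EuclideanSpace ℝ (Fin C × Fin d)) :
    logSoftmaxLoss x y β =
      Real.log (∑ k : Fin C, Real.exp (∑ j, β (k, j) * x j)) - ∑ j, β (y, j) * x j := by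
  have : Nonempty (Fin C) := ⟨y⟩
  unfold logSoftmaxLoss
  rw [Real.log_div (Real.exp_pos _).ne' (sum_exp_pos' _).ne', Real.log_exp]
  ring

lemma lsl_convex {C d : ℕ} (x : EuclideanSpace ℝ (Fin d)) (y : Fin C) :
    ConvexOn ℝ Set.univ (logSoftmaxLoss x y) := by
  have : Nonempty (Fin C) := ⟨y⟩
  refine ⟨convex_univ, fun β _ γ _ a b ha hb hab => ?_⟩
  have hs : ∀ k : Fin C, (∑ j, (a • β + b • γ) (k, j) * x j)
      = a * (∑ j, β (k, j) * x j) + b * (∑ j, γ (k, j) * x j) := by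
    intro k
    simp only [PiLp.add_apply, PiLp.smul_apply, smul_eq_mul, add_mul, mul_assoc,
      Finset.sum_add_distrib, Finset.mul_sum]
  simp only [smul_eq_mul, lsl_eq, hs]
  have := lse_convex (fun k => ∑ j, β (k, j) * x j) (fun k => ∑ j, γ (k, j) * x j) ha hb hab
  linarith

lemma convexOn_finset_sum {E : Type*} [NormedAddCommGroup E] [NormedSpace ℝ E]
    {ι : Type*} (t : Finset ι) (f : ι → E → ℝ)
    (h : ∀ i ∈ t, ConvexOn ℝ Set.univ (f i)) :
    ConvexOn ℝ Set.univ (fun x => ∑ i ∈ t, f i x) := by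
  classical
  induction t using Finset.induction with
  | empty => simpa using convexOn_const (0 : ℝ) convex_univ
  | insert _ _ hni ih =>
    rename_i a s
    simp only [Finset.sum_insert hni]
    exact (h a (Finset.mem_insert_self a s)).add
      (ih fun i hi => h i (Finset.mem_insert_of_mem hi))

lemma aux_limit {c K : ℝ} (hc0 : 0 ≤ c) (hK0 : 0 ≤ K)
    (h : ∀ t : ℝ, 0 < t → t < 1 → (1 - t) * c ≤ K) : c ≤ K := by
  by_contra hcon
  push_neg at hcon
  have hcpos : 0 < c := lt_of_le_of_lt hK0 hcon
  have ht0 : 0 < (c - K) / (2 * c) := div_pos (by linarith) (by linarith)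
  have ht1 : (c - K) / (2 * c) < 1 := by
    rw [div_lt_one (by linarith : (0:ℝ) < 2 * c)]; linarith
  have h2 := h _ ht0 ht1
  have h3 : (1 - (c - K) / (2 * c)) * c = c - (c - K) / 2 := by
    field_simp
  rw [h3] at h2
  linarith

lemma strong_min {E : Type*} [NormedAddCommGroup E] [InnerProductSpace ℝ E]
    {g : E → ℝ} (hg : ConvexOn ℝ Set.univ g) {lam : ℝ} (hlam : 0 < lam) {b : E}
    (hb : ∀ β, g b + lam / 2 * ‖b‖ ^ 2 ≤ g β + lam / 2 * ‖β‖ ^ 2) (β : E) :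
    lam / 2 * ‖β - b‖ ^ 2 ≤ (g β + lam / 2 * ‖β‖ ^ 2) - (g b + lam / 2 * ‖b‖ ^ 2) := by
  set f : E → ℝ := fun z => g z + lam / 2 * ‖z‖ ^ 2 with hf
  have hgeq : (fun z => f z - lam / 2 * ‖z‖ ^ 2) = g := by
    funext z; simp [hf]
  have hsc : StrongConvexOn Set.univ lam f := by
    rw [strongConvexOn_iff_convex, hgeq]; exact hg
  clear_value f
  have hstep : ∀ t : ℝ, 0 < t → t < 1 →
      (1 - t) * (lam / 2 * ‖β - b‖ ^ 2) ≤ f β - f b := by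
    intro t ht0 ht1
    have h2 := hsc.2 (Set.mem_univ β) (Set.mem_univ b) (le_of_lt ht0)
      (by linarith : (0:ℝ) ≤ 1 - t) (by ring)
    simp only [smul_eq_mul] at h2
    have h4 : f b ≤ f (t • β + (1 - t) • b) := by rw [hf]; exact hb (t • β + (1 - t) • b)
    have h6 : t * ((1 - t) * (lam / 2 * ‖β - b‖ ^ 2)) ≤ t * (f β - f b) := by
      nlinarith [h2, h4]
    exact (mul_le_mul_iff_right₀ ht0).mp h6
  have hfin := aux_limit (by positivity) (by rw [hf]; simp only; linarith [hb β]) hstep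
  rw [hf] at hfin
  exact hfin

lemma lsl_lipschitz {C d : ℕ} (x : EuclideanSpace ℝ (Fin d)) (hx : ‖x‖ ≤ 1) (y : Fin C)
    (β γ : EuclideanSpace ℝ (Fin C × Fin d)) :
    logSoftmaxLoss x y β - logSoftmaxLoss x y γ ≤ Real.sqrt C * ‖β - γ‖ := by
  have : Nonempty (Fin C) := ⟨y⟩
  set u : Fin C → ℝ := fun k => ∑ j, β (k, j) * x j with hu
  set v : Fin C → ℝ := fun k => ∑ j, γ (k, j) * x j with hv
  obtain ⟨k, -, hk⟩ := Finset.exists_max_image Finset.univ (fun c => u c - v c)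
    ⟨y, Finset.mem_univ y⟩
  have hRHS : 0 ≤ Real.sqrt C * ‖β - γ‖ := by positivity
  have h1 : logSoftmaxLoss x y β - logSoftmaxLoss x y γ ≤ (u k - v k) - (u y - v y) := by
    rw [lsl_eq, lsl_eq]
    have hshift := lse_shift u v (u k - v k) (fun c => by linarith [hk c (Finset.mem_univ c)])
    simp only [← hu, ← hv] at *
    linarith
  by_cases hky : k = y
  · subst hky; linarith
  -- now C ≥ 2
  have hC2 : (2 : ℝ) ≤ C := by
    have : 1 < Fintype.card (Fin C) := Fintype.one_lt_card_iff_nontrivial.2 ⟨⟨k, y, hky⟩⟩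
    rw [Fintype.card_fin] at this
    exact_mod_cast this
  have hx2 : ∑ j, x j ^ 2 ≤ 1 := by
    have h := EuclideanSpace.norm_eq x
    have h2 : ‖x‖ ^ 2 = ∑ j, x j ^ 2 := by
      rw [h, Real.sq_sqrt (Finset.sum_nonneg fun j _ => sq_nonneg _)]
      simp [sq_abs]
    nlinarith [norm_nonneg x]
  set T : Fin C → ℝ := fun c => ∑ j, (β (c, j) - γ (c, j)) ^ 2 with hT
  have hd : ∀ c : Fin C, (u c - v c) ^ 2 ≤ T c := by
    intro c
    have heq : u c - v c = ∑ j, (β (c, j) - γ (c, j)) * x j := by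
      rw [hu, hv]
      simp only [← Finset.sum_sub_distrib, sub_mul]
    rw [heq]
    calc (∑ j, (β (c, j) - γ (c, j)) * x j) ^ 2
        ≤ (∑ j, (β (c, j) - γ (c, j)) ^ 2) * ∑ j, x j ^ 2 :=
          Finset.sum_mul_sq_le_sq_mul_sq _ _ _
      _ ≤ T c * 1 := by
          apply mul_le_mul_of_nonneg_left hx2 (Finset.sum_nonneg fun j _ => sq_nonneg _)
      _ = T c := mul_one _
  have hTnn : ∀ c, 0 ≤ T c := by
    intro c; rw [hT]; exact Finset.sum_nonneg fun j _ => sq_nonneg _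
  have hsumT : ∑ c, T c = ‖β - γ‖ ^ 2 := by
    rw [EuclideanSpace.norm_eq, Real.sq_sqrt (Finset.sum_nonneg fun p _ => sq_nonneg _)]
    rw [Fintype.sum_prod_type]
    apply Finset.sum_congr rfl
    intro c _
    rw [hT]
    apply Finset.sum_congr rfl
    intro j _
    simp [sq_abs]
  have hTky : T k + T y ≤ ‖β - γ‖ ^ 2 := by
    rw [← hsumT]
    have := Finset.sum_le_sum_of_subset_of_nonneg
      (Finset.subset_univ ({k, y} : Finset (Fin C)))
      (fun c _ _ => hTnn c)
    rwa [Finset.sum_pair hky] at this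
  have hsq : ((u k - v k) - (u y - v y)) ^ 2 ≤ (C : ℝ) * ‖β - γ‖ ^ 2 := by
    nlinarith [hd k, hd y, sq_nonneg ((u k - v k) + (u y - v y)), sq_nonneg (‖β - γ‖)]
  have h2 : (u k - v k) - (u y - v y) ≤ Real.sqrt ((C : ℝ) * ‖β - γ‖ ^ 2) := by
    calc (u k - v k) - (u y - v y) ≤ |(u k - v k) - (u y - v y)| := le_abs_self _
      _ = Real.sqrt (((u k - v k) - (u y - v y)) ^ 2) := (Real.sqrt_sq_eq_abs _).symm
      _ ≤ Real.sqrt ((C : ℝ) * ‖β - γ‖ ^ 2) := Real.sqrt_le_sqrt hsq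
  rw [Real.sqrt_mul (Nat.cast_nonneg C), Real.sqrt_sq (norm_nonneg _)] at h2
  linarith

end Helpers

/-- Sensitivity of regularized multinomial logistic regression (Theorem 1). -/
theorem regMLR_sensitivity (C d N : ℕ) (hN : 0 < N) (lam : ℝ) (hlam : 0 < lam)
    (D D' : Fin N → EuclideanSpace ℝ (Fin d) × Fin C)
    (hx : ∀ i, ‖(D i).1‖ ≤ 1) (hx' : ∀ i, ‖(D' i).1‖ ≤ 1)
    (hadj : ∃ i₀, ∀ i, i ≠ i₀ → D i = D' i)
    (β₁ β₂ : EuclideanSpace ℝ (Fin C × Fin d))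
    (hmin₁ : ∀ β, regMLR lam D β₁ ≤ regMLR lam D β)
    (hmin₂ : ∀ β, regMLR lam D' β₂ ≤ regMLR lam D' β) :
    ‖β₁ - β₂‖ ≤ 2 * Real.sqrt C / (lam * N) := by
  obtain ⟨i₀, hadj⟩ := hadj
  have hNpos : (0 : ℝ) < N := by exact_mod_cast hN
  set R : ℝ := ‖β₁ - β₂‖ with hR
  -- convexity of the data-fitting terms
  have hconv : ∀ (DD : Fin N → EuclideanSpace ℝ (Fin d) × Fin C),
      ConvexOn ℝ Set.univ
        (fun β : EuclideanSpace ℝ (Fin C × Fin d) =>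
          (1 / (N : ℝ)) * ∑ i, logSoftmaxLoss (DD i).1 (DD i).2 β) := by
    intro DD
    have h := convexOn_finset_sum Finset.univ
      (fun i β => logSoftmaxLoss (DD i).1 (DD i).2 β)
      (fun i _ => lsl_convex _ _)
    have h2 := h.smul (c := 1 / (N : ℝ)) (by positivity)
    simpa [smul_eq_mul] using h2
  simp only [regMLR] at hmin₁ hmin₂
  have h1 := strong_min (hconv D) hlam hmin₁ β₂
  have h2 := strong_min (hconv D') hlam hmin₂ β₁
  rw [norm_sub_rev β₂ β₁, ← hR] at h1
  rw [← hR] at h2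
  -- the sums differ only at i₀
  have hdiffsum : ∀ β : EuclideanSpace ℝ (Fin C × Fin d),
      (∑ i, logSoftmaxLoss (D i).1 (D i).2 β) - (∑ i, logSoftmaxLoss (D' i).1 (D' i).2 β)
        = logSoftmaxLoss (D i₀).1 (D i₀).2 β - logSoftmaxLoss (D' i₀).1 (D' i₀).2 β := by
    intro β
    rw [← Finset.sum_sub_distrib]
    rw [Finset.sum_eq_single i₀ (fun i _ hne => by rw [hadj i hne]; ring)
      (fun h => absurd (Finset.mem_univ i₀) h)]
  have e1 := congrArg (fun z => (1 / (N : ℝ)) * z) (hdiffsum β₂)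
  have e2 := congrArg (fun z => (1 / (N : ℝ)) * z) (hdiffsum β₁)
  simp only [mul_sub] at e1 e2
  have ha := lsl_lipschitz (D i₀).1 (hx i₀) (D i₀).2 β₂ β₁
  have hb := lsl_lipschitz (D' i₀).1 (hx' i₀) (D' i₀).2 β₁ β₂
  rw [norm_sub_rev β₂ β₁, ← hR] at ha
  rw [← hR] at hb
  have hsum12 : (logSoftmaxLoss (D i₀).1 (D i₀).2 β₂ - logSoftmaxLoss (D' i₀).1 (D' i₀).2 β₂)
      - (logSoftmaxLoss (D i₀).1 (D i₀).2 β₁ - logSoftmaxLoss (D' i₀).1 (D' i₀).2 β₁)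
      ≤ 2 * Real.sqrt C * R := by linarith
  have hmul := mul_le_mul_of_nonneg_left hsum12 (by positivity : (0:ℝ) ≤ 1 / (N : ℝ))
  rw [mul_sub] at hmul
  have key : lam * R ^ 2 ≤ (1 / (N : ℝ)) * (2 * Real.sqrt C * R) := by
    linarith [h1, h2, hmul, e1, e2]
  rcases le_or_gt R 0 with hR0 | hRpos
  · exact le_trans hR0 (by positivity)
  · rw [le_div_iff₀ (by positivity : (0:ℝ) < lam * N)]
    have key2 := mul_le_mul_of_nonneg_left key (le_of_lt hNpos)
    have hNe : (N : ℝ) * ((1 / (N : ℝ)) * (2 * Real.sqrt C * R)) = 2 * Real.sqrt C * R := by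
      field_simp
    rw [hNe] at key2
    nlinarith [key2, hRpos]
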